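/- In the infinite dihedral group D_∞ = ⟨r, t | t² = 1, trt = r⁻¹⟩, the power graph is not equal to the enhanced power graph, but the enhanced power graph equals the commuting graph. -/

import Mathlib

open Subgroup

/-- The power graph of a group: `x ~ y` iff `x ≠ y` and one is a power of the other. -/
def powGraph (G : Type*) [Group G] : SimpleGraph G where
  Adj x y := x ≠ y ∧ (x ∈ zpowers y ∨ y ∈ zpowers x)
  symm := by refine ⟨?_⟩; rintro x y ⟨h1, h2⟩; exact ⟨h1.symm, h2.symm⟩
  loopless := by refine ⟨?_⟩; rintro x ⟨h1, _⟩; exact h1 rfl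

/-- The enhanced power graph: `x ~ y` iff `x ≠ y` and `⟨x, y⟩` is cyclic. -/
def epowGraph (G : Type*) [Group G] : SimpleGraph G where
  Adj x y := x ≠ y ∧ IsCyclic (closure ({x, y} : Set G))
  symm := by
    refine ⟨?_⟩
    rintro x y ⟨h1, h2⟩
    refine ⟨h1.symm, ?_⟩
    rwa [Set.pair_comm y x]
  loopless := by refine ⟨?_⟩; rintro x ⟨h1, _⟩; exact h1 rfl

/-- The commuting graph: `x ~ y` iff `x ≠ y` and `x y = y x`. -/
def comGraph (G : Type*) [Group G] : SimpleGraph G where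
  Adj x y := x ≠ y ∧ x * y = y * x
  symm := by refine ⟨?_⟩; rintro x y ⟨h1, h2⟩; exact ⟨h1.symm, h2.symm⟩
  loopless := by refine ⟨?_⟩; rintro x ⟨h1, _⟩; exact h1 rfl

/-- `G` has a subgroup isomorphic to `H`. -/
def HasSubgroupIso (G : Type*) [Group G] (H : Type*) [Group H] : Prop :=
  ∃ K : Subgroup G, Nonempty (K ≃* H)

/-!
Two elements generating a cyclic subgroup commute, so the enhanced power graph of any group lies
inside its commuting graph. In a dihedral group, `r i` commutes with `sr j` only when `2 i = 0`,
and `sr i` with `sr j` only when `2 (i - j) = 0`; when `2` is not a zero divisor (as in `ℤ`), two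
commuting elements are therefore both rotations, lying in the cyclic group `⟨r 1⟩`, or one of
them is `1`, or they are equal. Finally `r 2` and `r 3` generate a cyclic subgroup of `D_∞`
although neither is a power of the other.
-/

section Graphs

variable {G : Type*} [Group G]

theorem isCyclic_closure_pair_of_mem {K : Subgroup G} [IsCyclic K] {x y : G}
    (hx : x ∈ K) (hy : y ∈ K) : IsCyclic (closure ({x, y} : Set G)) :=
  isCyclic_of_le <| (closure_le K).mpr <| Set.insert_subset hx (Set.singleton_subset_iff.mpr hy)

theorem commute_of_isCyclic_closure_pair {x y : G} (h : IsCyclic (closure ({x, y} : Set G))) :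
    Commute x y := by
  have hx : x ∈ closure ({x, y} : Set G) := subset_closure (Set.mem_insert x _)
  have hy : y ∈ closure ({x, y} : Set G) := subset_closure (Set.mem_insert_of_mem x rfl)
  exact congrArg Subtype.val (mul_comm' (⟨x, hx⟩ : closure ({x, y} : Set G)) ⟨y, hy⟩)

theorem epowGraph_le_comGraph (G : Type*) [Group G] : epowGraph G ≤ comGraph G :=
  fun _ _ ⟨hne, hcyc⟩ ↦ ⟨hne, commute_of_isCyclic_closure_pair hcyc⟩

end Graphs

namespace DihedralGroup

variable {n : ℕ}

theorem commute_r_sr_iff {i j : ZMod n} : Commute (r i) (sr j) ↔ 2 * i = 0 := by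
  rw [Commute, SemiconjBy, r_mul_sr, sr_mul_r, sr.injEq]
  constructor <;> intro h <;> linear_combination -h

theorem commute_sr_sr_iff {i j : ZMod n} : Commute (sr i) (sr j) ↔ 2 * (i - j) = 0 := by
  rw [Commute, SemiconjBy, sr_mul_sr, sr_mul_sr, r.injEq]
  constructor <;> intro h <;> linear_combination -h

theorem r_mem_zpowers_r_one (i : ZMod n) : r i ∈ zpowers (r 1 : DihedralGroup n) :=
  ⟨(i.cast : ℤ), show r 1 ^ _ = _ by rw [r_one_zpow, ZMod.intCast_zmod_cast]⟩

-- For even `n ≠ 0` this fails: `r (n / 2)` and `sr 0` commute and generate a Klein four-group.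
theorem isCyclic_closure_pair_of_commute (h2 : IsLeftRegular (2 : ZMod n))
    {x y : DihedralGroup n} (h : Commute x y) :
    IsCyclic (closure ({x, y} : Set (DihedralGroup n))) := by
  have two_mul_eq_zero {i : ZMod n} (hi : 2 * i = 0) : i = 0 :=
    h2 (show 2 * i = 2 * 0 by rwa [mul_zero])
  match x, y with
  | r i, r j => exact isCyclic_closure_pair_of_mem (r_mem_zpowers_r_one i) (r_mem_zpowers_r_one j)
  | r i, sr j =>
    rw [two_mul_eq_zero (commute_r_sr_iff.mp h), r_zero]
    exact isCyclic_closure_pair_of_mem (one_mem _) (mem_zpowers (sr j))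
  | sr i, r j =>
    rw [two_mul_eq_zero (commute_r_sr_iff.mp h.symm), r_zero]
    exact isCyclic_closure_pair_of_mem (mem_zpowers (sr i)) (one_mem _)
  | sr i, sr j =>
    rw [sub_eq_zero.mp (two_mul_eq_zero (commute_sr_sr_iff.mp h))]
    exact isCyclic_closure_pair_of_mem (mem_zpowers (sr j)) (mem_zpowers (sr j))

theorem r_mem_zpowers_r_iff {i j : ZMod n} : r i ∈ zpowers (r j) ↔ j ∣ i := by
  simp only [mem_zpowers_iff, r_zpow, r.injEq]
  constructor
  · rintro ⟨k, hk⟩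
    exact ⟨k, hk.symm⟩
  · rintro ⟨c, rfl⟩
    obtain ⟨k, rfl⟩ := ZMod.intCast_surjective c
    exact ⟨k, rfl⟩

end DihedralGroup

open DihedralGroup in
theorem infinite_dihedral_graphs :
    powGraph (DihedralGroup 0) ≠ epowGraph (DihedralGroup 0) ∧
      epowGraph (DihedralGroup 0) = comGraph (DihedralGroup 0) := by
  refine ⟨fun h ↦ ?_, le_antisymm (epowGraph_le_comGraph _) ?_⟩
  · have hadj : (epowGraph (DihedralGroup 0)).Adj (r 2) (r 3) :=
      ⟨by decide, isCyclic_closure_pair_of_mem (r_mem_zpowers_r_one 2) (r_mem_zpowers_r_one 3)⟩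
    rw [← h] at hadj
    rcases hadj.2 with h23 | h32
    · exact absurd (r_mem_zpowers_r_iff.mp h23) (by decide : ¬ (3 : ℤ) ∣ 2)
    · exact absurd (r_mem_zpowers_r_iff.mp h32) (by decide : ¬ (2 : ℤ) ∣ 3)
  · exact fun x y ⟨hne, hcomm⟩ ↦
      ⟨hne, isCyclic_closure_pair_of_commute (mul_right_injective₀ two_ne_zero) hcomm⟩
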